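/- Let K be a field of characteristic zero, a ∈ lie_m^m any tuple, b ∈ lie_n^n a tuple such that D_b is special, and 1 ≤ i ≤ m. Let U := D_{a ∘_i 0} be the tangential derivation of lie_{m+n−1} attached to the tuple a ∘_i 0 (with entries Φ_i(a_j) for j < i, the entry Φ_i(a_i) repeated in slots i, …, i+n−1, and Φ_i(a_j) in slot j+n−1 for j > i), and let V := D_{0 ∘_i b} be the tangential derivation attached to the tuple with entries Ψ_i(b_k) in slots i, …, i+n−1 and 0 elsewhere. Then the derivations U and V commute: ⁅U, V⁆ = U∘V − V∘U = 0. -/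

import Mathlib

open FreeLieAlgebra

variable (K : Type) [Field K] [CharZero K]

/-- The free Lie algebra over `K` on `N` generators `x_1, …, x_N`
(indexed here 0-based by `Fin N`). -/
abbrev lieF (N : ℕ) : Type := FreeLieAlgebra K (Fin N)

/-- The `(k+1)`-st generator of `lieF K N` (0-based index `k`), junk value `0` out of range. -/
noncomputable def xg (N k : ℕ) : lieF K N :=
  if h : k < N then FreeLieAlgebra.of K (⟨k, h⟩ : Fin N) else 0

/-- The Lie algebra homomorphism `Φ_i : lie_m → lie_{m+n-1}` sending (0-based) `x_j ↦ x_j`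
for `j < i`, `x_i ↦ x_i + x_{i+1} + ⋯ + x_{i+n-1}`, and `x_j ↦ x_{j+n-1}` for `j > i`. -/
noncomputable def PhiL (m n i : ℕ) : lieF K m →ₗ⁅K⁆ lieF K (m + n - 1) :=
  FreeLieAlgebra.lift K fun j : Fin m =>
    if (j : ℕ) < i then xg K (m + n - 1) (j : ℕ)
    else if (j : ℕ) = i then ∑ t : Fin n, xg K (m + n - 1) (i + (t : ℕ))
    else xg K (m + n - 1) ((j : ℕ) + n - 1)

/-- The Lie algebra homomorphism `Ψ_i : lie_n → lie_{m+n-1}` sending (0-based)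
`x_j ↦ x_{i+j}`. -/
noncomputable def PsiL (m n i : ℕ) : lieF K n →ₗ⁅K⁆ lieF K (m + n - 1) :=
  FreeLieAlgebra.lift K fun j : Fin n => xg K (m + n - 1) (i + (j : ℕ))

/-- The partial composition `f ∘_i g := Φ_i(f) + Ψ_i(g)` of free Lie algebra elements
(the pivot `i` is 0-based). -/
noncomputable def compL {m n : ℕ} (f : lieF K m) (i : ℕ) (g : lieF K n) :
    lieF K (m + n - 1) :=
  PhiL K m n i f + PsiL K m n i g

/-- The canonical identification `lie_N ≅ lie_{N'}` for `N = N'`. -/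
noncomputable def recastL {N N' : ℕ} (hNN : N = N') : lieF K N →ₗ⁅K⁆ lieF K N' :=
  FreeLieAlgebra.lift K fun j => FreeLieAlgebra.of K (Fin.cast hNN j)

/-- The Lie algebra of derivations of `lie_N`. -/
abbrev DerL (N : ℕ) : Type := LieDerivation K (lieF K N) (lieF K N)

/-- Entry of a tuple at a natural-number index (junk value `0` out of range). -/
noncomputable def tget {N : ℕ} (a : Fin N → lieF K N) (k : ℕ) : lieF K N :=
  if h : k < N then a ⟨k, h⟩ else 0

/-- The composed tuple `a ∘_i b ∈ (lie_{m+n-1})^{m+n-1}` (0-based indices): its entries are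
`Φ_i(a_j)` in slot `j` for `j < i`, `Φ_i(a_i) + Ψ_i(b_k)` in slot `i+k` for `0 ≤ k < n`,
and `Φ_i(a_j)` in slot `j+n-1` for `j > i`. -/
noncomputable def compTup {m n : ℕ} (a : Fin m → lieF K m) (i : ℕ)
    (b : Fin n → lieF K n) : Fin (m + n - 1) → lieF K (m + n - 1) := fun k =>
  if (k : ℕ) < i then PhiL K m n i (tget K a (k : ℕ))
  else if (k : ℕ) < i + n then
    PhiL K m n i (tget K a i) + PsiL K m n i (tget K b ((k : ℕ) - i))
  else PhiL K m n i (tget K a ((k : ℕ) + 1 - n))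

/-!
For tangential derivations `D_c`, `D_d` one has
`⁅D_c, D_d⁆ x_k = ⁅x_k, D_c d_k - D_d c_k + ⁅c_k, d_k⁆⁆`, so it suffices that these entries vanish
for `c = a ∘_i 0` and `d = 0 ∘_i b`. Every `c_k` lies in the image of `Φ_i`, on which `V` vanishes:
on `x_j` with `j ≠ i` because `d` is zero in the corresponding slot, and on `x_i` because
`V (Φ_i x_i) = Ψ_i (D_b (x_1 + ⋯ + x_n)) = 0` as `D_b` is special. Outside the slots
`i, …, i+n-1` also `d_k = 0`; inside them `c_k = Φ_i a_i` and `d_k ∈ im Ψ_i`, where `U` acts as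
`⁅·, Φ_i a_i⁆`, so `U d_k = ⁅d_k, c_k⁆` cancels `⁅c_k, d_k⁆`.
-/

open LieSubalgebra

namespace FreeLieAlgebra

variable {R X : Type*} [CommRing R]

theorem lieSpan_range_of : lieSpan R (FreeLieAlgebra R X) (Set.range (of R)) = ⊤ := by
  set S := lieSpan R (FreeLieAlgebra R X) (Set.range (of R))
  let g : FreeLieAlgebra R X →ₗ⁅R⁆ S := lift R fun x => ⟨of R x, subset_lieSpan ⟨x, rfl⟩⟩
  have hg : S.incl.comp g = LieHom.id := hom_ext fun x => by simp [g]
  refine eq_top_iff.mpr fun y _ => ?_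
  rw [← LieHom.id_apply (R := R) y, ← hg]
  exact (g y).2

theorem lieDerivation_map_ext {L M : Type*} [LieRing L] [LieAlgebra R L] [AddCommGroup M]
    [Module R M] [LieRingModule L M] [LieModule R L M] (f : FreeLieAlgebra R X →ₗ⁅R⁆ L)
    {D₁ D₂ : LieDerivation R L M} (h : ∀ j, D₁ (f (of R j)) = D₂ (f (of R j)))
    (x : FreeLieAlgebra R X) : D₁ (f x) = D₂ (f x) := by
  have hx : f x ∈ lieSpan R L (f '' Set.range (of R)) := by
    rw [← map_lieSpan, lieSpan_range_of]
    exact ⟨x, trivial, rfl⟩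
  refine LieDerivation.eqOn_lieSpan ?_ hx
  rintro _ ⟨_, ⟨j, rfl⟩, rfl⟩
  exact h j

end FreeLieAlgebra

theorem LieDerivation.commutator_apply_of_apply_eq_lie {R L : Type*} [CommRing R] [LieRing L]
    [LieAlgebra R L] {D₁ D₂ : LieDerivation R L L} {x c d : L} (h₁ : D₁ x = ⁅x, c⁆)
    (h₂ : D₂ x = ⁅x, d⁆) : ⁅D₁, D₂⁆ x = ⁅x, D₁ d - D₂ c + ⁅c, d⁆⁆ := by
  rw [commutator_apply, h₁, h₂, apply_lie_eq_add, apply_lie_eq_add, h₁, h₂, lie_add, lie_sub,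
    leibniz_lie, ← lie_skew ⁅x, d⁆ c]
  abel

section PartialComposition

variable {K : Type} [Field K] {m n i : ℕ}

lemma xg_of_lt {N k : ℕ} (h : k < N) : xg K N k = of K (⟨k, h⟩ : Fin N) :=
  dif_pos h

lemma tget_zero (N k : ℕ) : tget K (fun _ : Fin N => (0 : lieF K N)) k = 0 := by
  unfold tget
  split <;> rfl

lemma tget_val {N : ℕ} (a : Fin N → lieF K N) (k : Fin N) : tget K a k = a k :=
  dif_pos k.isLt

lemma PsiL_of (hi : i < m) (j : Fin n) :
    PsiL K m n i (of K j) = of K (⟨i + j, by omega⟩ : Fin (m + n - 1)) := by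
  rw [PsiL, lift_of_apply, xg_of_lt]

lemma compTup_zero_right_of_mem (a : Fin m → lieF K m) {k : Fin (m + n - 1)} (h₁ : i ≤ k)
    (h₂ : k < i + n) : compTup K a i (fun _ => 0) k = PhiL K m n i (tget K a i) := by
  rw [compTup, if_neg (by omega), if_pos h₂, tget_zero, map_zero, add_zero]

lemma compTup_zero_right_mem_range (a : Fin m → lieF K m) (k : Fin (m + n - 1)) :
    compTup K a i (fun _ => 0) k ∈ Set.range (PhiL K m n i) := by
  unfold compTup
  split_ifs
  · exact ⟨_, rfl⟩
  · exact ⟨tget K a i, by rw [tget_zero, map_zero, add_zero]⟩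
  · exact ⟨_, rfl⟩

lemma compTup_zero_left_of_mem (b : Fin n → lieF K n) {k : Fin (m + n - 1)} (h₁ : i ≤ k)
    (h₂ : k < i + n) :
    compTup K (fun _ => 0) i b k = PsiL K m n i (tget K b (k - i)) := by
  rw [compTup, if_neg (by omega), if_pos h₂, tget_zero, map_zero, zero_add]

lemma compTup_zero_left_of_not_mem (b : Fin n → lieF K n) {k : Fin (m + n - 1)}
    (hk : ¬(i ≤ k ∧ k < i + n)) : compTup K (fun _ => 0) i b k = 0 := by
  unfold compTup
  split_ifs
  · rw [tget_zero, map_zero]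
  · omega
  · rw [tget_zero, map_zero]

lemma apply_PsiL_eq_lie_PhiL (hi : i < m) {a : Fin m → lieF K m}
    {U : DerL K (m + n - 1)}
    (hU : ∀ k, U (of K k) = ⁅of K k, compTup K a i (fun _ => (0 : lieF K n)) k⁆)
    (f : lieF K n) : U (PsiL K m n i f) = ⁅PsiL K m n i f, PhiL K m n i (tget K a i)⁆ := by
  refine lieDerivation_map_ext (D₂ := LieDerivation.inner K _ _ _) _ (fun j => ?_) f
  rw [PsiL_of hi, hU, LieDerivation.inner_apply_apply,
    compTup_zero_right_of_mem a (by simp) (by simp)]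

lemma PhiL_of_self (hi : i < m) :
    PhiL K m n i (of K ⟨i, hi⟩) = PsiL K m n i (∑ t : Fin n, of K t) := by
  simp only [PhiL, PsiL, lift_of_apply, lt_irrefl, if_false, if_true, map_sum]

lemma apply_PsiL_of_eq_PsiL_apply_of (hi : i < m) {b : Fin n → lieF K n} {Db : DerL K n}
    (hDb : ∀ k, Db (of K k) = ⁅of K k, b k⁆) {V : DerL K (m + n - 1)}
    (hV : ∀ k, V (of K k) = ⁅of K k, compTup K (fun _ => (0 : lieF K m)) i b k⁆) (t : Fin n) :
    V (PsiL K m n i (of K t)) = PsiL K m n i (Db (of K t)) := by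
  rw [PsiL_of hi, hV, compTup_zero_left_of_mem b (by simp) (by simp), hDb, LieHom.map_lie,
    PsiL_of hi, Nat.add_sub_cancel_left, tget_val]

lemma apply_PhiL_eq_zero_of_special (hi : i < m) {b : Fin n → lieF K n} {Db : DerL K n}
    (hDb : ∀ k, Db (of K k) = ⁅of K k, b k⁆) (hDbs : Db (∑ k : Fin n, of K k) = 0)
    {V : DerL K (m + n - 1)}
    (hV : ∀ k, V (of K k) = ⁅of K k, compTup K (fun _ => (0 : lieF K m)) i b k⁆)
    (f : lieF K m) : V (PhiL K m n i f) = 0 := by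
  refine lieDerivation_map_ext (D₂ := 0) _ (fun j => ?_) f
  rw [LieDerivation.zero_apply]
  rcases lt_trichotomy (j : ℕ) i with hj | hj | hj
  · rw [PhiL, lift_of_apply, if_pos hj, xg_of_lt (by omega), hV,
      compTup_zero_left_of_not_mem b (by dsimp only; omega), lie_zero]
  · obtain rfl : j = ⟨i, hi⟩ := Fin.ext hj
    rw [PhiL_of_self, map_sum, map_sum]
    simp_rw [apply_PsiL_of_eq_PsiL_apply_of hi hDb hV, ← map_sum, hDbs, map_zero]
  · rw [PhiL, lift_of_apply, if_neg (by omega), if_neg (by omega), xg_of_lt (by omega), hV,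
      compTup_zero_left_of_not_mem b (by dsimp only; omega), lie_zero]

end PartialComposition

theorem comp_parts_commute (m n : ℕ) (i : ℕ) (hi : i < m)
    (a : Fin m → lieF K m) (b : Fin n → lieF K n)
    (Db : DerL K n)
    (hDb : ∀ k : Fin n, Db (FreeLieAlgebra.of K k) = ⁅FreeLieAlgebra.of K k, b k⁆)
    (hDbs : Db (∑ k : Fin n, FreeLieAlgebra.of K k) = 0)
    (U V : DerL K (m + n - 1))
    (hU : ∀ k : Fin (m + n - 1),
      U (FreeLieAlgebra.of K k) =
        ⁅FreeLieAlgebra.of K k, compTup K a i (fun _ => (0 : lieF K n)) k⁆)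
    (hV : ∀ k : Fin (m + n - 1),
      V (FreeLieAlgebra.of K k) =
        ⁅FreeLieAlgebra.of K k, compTup K (fun _ => (0 : lieF K m)) i b k⁆) :
    ⁅U, V⁆ = 0 := by
  have hVc : ∀ k, V (compTup K a i (fun _ => 0) k) = 0 := fun k => by
    obtain ⟨f, hf⟩ := compTup_zero_right_mem_range a k
    rw [← hf, apply_PhiL_eq_zero_of_special hi hDb hDbs hV]
  refine LieDerivation.ext_of_lieSpan_eq_top _ lieSpan_range_of ?_
  rintro _ ⟨k, rfl⟩
  rw [LieDerivation.commutator_apply_of_apply_eq_lie (hU k) (hV k), hVc, sub_zero,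
    LieDerivation.zero_apply]
  by_cases hk : i ≤ k ∧ k < i + n
  · rw [compTup_zero_left_of_mem b hk.1 hk.2, apply_PsiL_eq_lie_PhiL hi hU,
      compTup_zero_right_of_mem a hk.1 hk.2, ← lie_skew (PhiL K m n i _), add_neg_cancel,
      lie_zero]
  · rw [compTup_zero_left_of_not_mem b hk, map_zero, lie_zero, zero_add, lie_zero]
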